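/- arXiv:math/9905128 — 4 statements merged into one kernel-verified Lean document; each statement's English description precedes it below -/
import Mathlib

section
/- Let U be an associative unital algebra over a commutative ring, B ⊆ U a subalgebra, and I ⊆ U a left ideal such that U = B ⊕ I as modules, with projection ρ: U → B along I. Then for every u ∈ U and every v in the center Z(U) of U, ρ(uv) = ρ(u)ρ(v); in particular the restriction of ρ to Z(U) is an algebra homomorphism. -/
/-!
STATEMENT 12: Let `U` be an associative unital algebra over a commutative ring `R`,
`B ⊆ U` a subalgebra, `I ⊆ U` a left ideal with `U = B ⊕ I` as `R`-modules, and
`ρ : U → B` the projection onto `B` along `I`.  Then for every `u ∈ U` and every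
`v ∈ Z(U)` one has `ρ(uv) = ρ(u)ρ(v)`; in particular `ρ` restricted to `Z(U)` is an
algebra homomorphism (it is `R`-linear, multiplicative and unital).
-/

/-- the projection onto a subalgebra along a complementary left ideal
is multiplicative against central elements; in particular its restriction to the center
is an algebra homomorphism. -/
theorem proj_mul_central
    (R : Type*) (U : Type*) [CommRing R] [Ring U] [Algebra R U]
    (B : Subalgebra R U) (I : Submodule U U)
    (hcompl : IsCompl (Subalgebra.toSubmodule B) (I.restrictScalars R))
    (ρ : U →ₗ[R] U)
    (hρ_mem : ∀ u, ρ u ∈ B)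
    (hρ_proj : ∀ u, u - ρ u ∈ I) :
    (∀ u : U, ∀ v ∈ Set.center U, ρ (u * v) = ρ u * ρ v) ∧ ρ 1 = 1 := by
  have key : ∀ u b : U, b ∈ B → u - b ∈ I → ρ u = b := by
    intro u b hbB hI
    have h1 : ρ u - b ∈ (Subalgebra.toSubmodule B : Submodule R U) :=
      Submodule.sub_mem _ (hρ_mem u) hbB
    have h2 : ρ u - b ∈ I.restrictScalars R := by
      have : ρ u - b = (u - b) - (u - ρ u) := by noncomm_ring
      rw [this]
      exact Submodule.sub_mem _ hI (hρ_proj u)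
    have := hcompl.disjoint.le_bot ⟨h1, h2⟩
    rw [Submodule.mem_bot] at this
    exact sub_eq_zero.mp this
  constructor
  · intro u v hv
    apply key
    · exact B.mul_mem (hρ_mem u) (hρ_mem v)
    · have hcomm : ∀ w : U, w * v = v * w := fun w => (hv.comm w).symm
      have h1 : v * (u - ρ u) ∈ I := I.smul_mem _ (hρ_proj u)
      have h2 : ρ u * (v - ρ v) ∈ I := I.smul_mem _ (hρ_proj v)
      have : u * v - ρ u * ρ v = v * (u - ρ u) + ρ u * (v - ρ v) := by
        rw [mul_sub, mul_sub, ← hcomm u, hcomm (ρ u)]; abel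
      rw [this]
      exact I.add_mem h1 h2
  · exact key 1 1 B.one_mem (by simp)
end

section
/- Let V be an h-adically complete ℂ[[h]]-module and let A, B ⊆ V be ℂ[[h]]-submodules that are closed in the h-adic topology, with B ⊆ A. Let p: V → V/hV be the canonical projection. Suppose that p(A) = p(B), and that for every a ∈ A, b ∈ B and c ∈ V with a − b = hc one has c ∈ A. Then A = B. -/
/-!
STATEMENT 13 (the key `h`-adic lemma).

Context: `ℂ[[h]]` is the ring of formal power series in one variable `h` over `ℂ`
(`PowerSeries ℂ`, with `h = PowerSeries.X`).  A `ℂ[[h]]`-module `V` carries the `h`-adic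
topology, with `{hⁿV}` a base of neighbourhoods of `0`; `V` is complete if it is
Hausdorff and complete for this topology (`IsAdicComplete`).  A submodule `A ⊆ V` is
closed iff it contains every `v` with the property that for each `n` there is `a ∈ A`
with `v − a ∈ hⁿV`.

Claim: if `A, B ⊆ V` are closed submodules, `B ⊆ A`, the images of `A` and `B` under the
projection `p : V → V/hV` agree, and whenever `a ∈ A`, `b ∈ B`, `c ∈ V` satisfy
`a − b = h·c` one has `c ∈ A`, then `A = B`.
-/

noncomputable section

open PowerSeries

/-- A submodule of a `ℂ[[h]]`-module is closed in the `h`-adic topology iff it contains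
every point all of whose `h`-adic neighbourhoods meet it. -/
def IsHAdicClosed (V : Type*) [AddCommGroup V] [Module (PowerSeries ℂ) V]
    (A : Submodule (PowerSeries ℂ) V) : Prop :=
  ∀ v : V,
    (∀ n : ℕ, ∃ a ∈ A,
      v - a ∈ (Ideal.span {(PowerSeries.X : PowerSeries ℂ)}) ^ n •
        (⊤ : Submodule (PowerSeries ℂ) V)) →
    v ∈ A

open Pointwise in
/-- let `V` be an `h`-adically complete `ℂ[[h]]`-module, `A, B ⊆ V`
closed submodules with `B ⊆ A` having the same image under `p : V → V/hV`, and such that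
`a ∈ A`, `b ∈ B`, `a − b = h·c` imply `c ∈ A`.  Then `A = B`. -/
theorem hadic_lemma
    (V : Type*) [AddCommGroup V] [Module (PowerSeries ℂ) V]
    [IsAdicComplete (Ideal.span {(PowerSeries.X : PowerSeries ℂ)}) V]
    (A B : Submodule (PowerSeries ℂ) V)
    (hA : IsHAdicClosed V A) (hB : IsHAdicClosed V B)
    (hBA : B ≤ A)
    (hV : Submodule (PowerSeries ℂ) V)
    (hhV : hV = (Ideal.span {(PowerSeries.X : PowerSeries ℂ)}) •
      (⊤ : Submodule (PowerSeries ℂ) V))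
    (himage : A.map hV.mkQ = B.map hV.mkQ)
    (hquot : ∀ a ∈ A, ∀ b ∈ B, ∀ c : V, a - b = (PowerSeries.X : PowerSeries ℂ) • c → c ∈ A) :
    A = B := by
  refine le_antisymm (fun a ha => ?_) hBA
  -- key step: every `c ∈ A` decomposes as `b + X • c'` with `b ∈ B`, `c' ∈ A`
  have key : ∀ c ∈ A, ∃ b ∈ B, ∃ c' ∈ A, c = b + (PowerSeries.X : PowerSeries ℂ) • c' := by
    intro c hc
    have h1 : hV.mkQ c ∈ A.map hV.mkQ := ⟨c, hc, rfl⟩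
    rw [himage] at h1
    obtain ⟨b, hb, hbe⟩ := h1
    have h2 : c - b ∈ hV := by
      rw [← Submodule.Quotient.mk_eq_zero hV] at *
      simpa [Submodule.Quotient.mk_sub] using by
        rw [show (Submodule.Quotient.mk b : V ⧸ hV) = Submodule.Quotient.mk c from hbe]
        simp
    rw [hhV, Submodule.ideal_span_singleton_smul] at h2
    obtain ⟨c', -, hc'⟩ := Set.mem_smul_set.mp h2
    refine ⟨b, hb, c', hquot c hc b hb c' hc'.symm, ?_⟩
    rw [hc']; abel
  choose f hfB g hgA hrel using key
  -- the sequence of remainders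
  let seq : ℕ → {c : V // c ∈ A} := fun n => Nat.rec ⟨a, ha⟩ (fun _ p => ⟨g p.1 p.2, hgA p.1 p.2⟩) n
  -- partial sums
  let s : ℕ → V := fun n => ∑ k ∈ Finset.range n, (PowerSeries.X : PowerSeries ℂ) ^ k • f (seq k).1 (seq k).2
  have hsB : ∀ n, s n ∈ B := by
    intro n
    exact Submodule.sum_mem B fun k _ => Submodule.smul_mem B _ (hfB _ _)
  have hrem : ∀ n, a - s n = (PowerSeries.X : PowerSeries ℂ) ^ n • (seq n).1 := by
    intro n
    induction n with
    | zero => simp [s, seq]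
    | succ n ih =>
      have hs : s (n + 1) = s n + (PowerSeries.X : PowerSeries ℂ) ^ n • f (seq n).1 (seq n).2 := by
        simp [s, Finset.sum_range_succ]
      have hc : (seq n).1 = f (seq n).1 (seq n).2 + (PowerSeries.X : PowerSeries ℂ) • (seq (n+1)).1 := by
        exact hrel (seq n).1 (seq n).2
      have h3 : (PowerSeries.X : PowerSeries ℂ) ^ n • (seq n).1
          = (PowerSeries.X : PowerSeries ℂ) ^ n • f (seq n).1 (seq n).2
            + (PowerSeries.X : PowerSeries ℂ) ^ (n + 1) • (seq (n+1)).1 := by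
        rw [show ((PowerSeries.X : PowerSeries ℂ)) ^ (n+1) = X ^ n * X from pow_succ _ _,
          mul_smul, ← smul_add, ← hc]
      rw [hs, show a - (s n + (PowerSeries.X : PowerSeries ℂ) ^ n • f (seq n).1 (seq n).2)
          = (a - s n) - (PowerSeries.X : PowerSeries ℂ) ^ n • f (seq n).1 (seq n).2 by abel,
        ih, h3]
      abel
  -- conclude by closedness of B
  apply hB
  intro n
  refine ⟨s n, hsB n, ?_⟩
  rw [hrem n, Ideal.span_singleton_pow, Submodule.ideal_span_singleton_smul]
  exact Submodule.smul_mem_pointwise_smul _ _ _ trivial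
end
end

section
/- Let s_π = s_{π(1)}···s_{π(l)} be the Coxeter element of the Weyl group W associated with a permutation π of {1,…,l}. Then 1 − s_π is invertible on the span of the roots, and for all i, j the matrix elements of the Cayley transform of s_π in the basis of simple roots are c_ij^π = ((1+s_π)(1−s_π)^{-1}α_i, α_j) = ε_ij^π b_ij, where ε_ij^π = −1 if π^{-1}(i) < π^{-1}(j), ε_ij^π = 0 if i = j, and ε_ij^π = +1 if π^{-1}(i) > π^{-1}(j). -/
/-!
Order the simple roots along the Coxeter word and split `B = E + Eᵀ`, where `E` keeps the
half-diagonal and the entries `(α i, α j)` with `i` before `j`.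
For `c = s_{π 0} ⋯ s_{π (l-1)}` one has `E(w, c v) = -E(v, w)`: on `w = α i` the reflections before `s i` do not change
`E(α i, ·)`, those after it do not change `E(·, α i)`, and a single reflection gives
`E(α, s_α x) = -E(x, α)`.  A vector fixed by `c` is then `B`-orthogonal to everything, so
`1 - c` is invertible, and writing `α i = (1 - c) w` the same identity turns
`((1 + c) w, α j)` into `E(α j, α i) - E(α i, α j)`.
-/

noncomputable section

theorem List.apply_prod_map_eq_of_forall {R M X ι : Type*} [Semiring R]
    [AddCommMonoid M] [Module R M] {f : ι → Module.End R M} {φ : M → X} {L : List ι}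
    (h : ∀ k ∈ L, ∀ x, φ (f k x) = φ x) (x : M) : φ ((L.map f).prod x) = φ x := by
  induction L with
  | nil => rfl
  | cons k L ih =>
    rw [List.map_cons, List.prod_cons, Module.End.mul_apply, h k List.mem_cons_self,
      ih fun k hk => h k (List.mem_cons_of_mem _ hk)]

namespace LinearMap.BilinForm

section Skew

variable {K V : Type*} [Field K] [AddCommGroup V] [Module K V] {B E : LinearMap.BilinForm K V}

theorem apply_reflection_eq_neg (hB : ∀ x y, B x y = E x y + E y x) {α : V} (hα : B α α ≠ 0)
    (x : V) : E α (x - (2 * B x α / B α α) • α) = -E x α := by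
  have hαα : B α α = 2 * E α α := by rw [hB]; ring
  have hE : E α α ≠ 0 := right_ne_zero_of_mul (hαα ▸ hα)
  have h2 : (2 : K) ≠ 0 := left_ne_zero_of_mul (hαα ▸ hα)
  rw [map_sub, map_smul, smul_eq_mul, hαα, hB x α]
  field_simp
  ring

variable {ι : Type*} {α : ι → V} {s : ι → Module.End K V}

theorem apply_prod_reflections_eq_neg (hB : ∀ x y, B x y = E x y + E y x)
    (hs : ∀ i v, s i v = v - (2 * B v (α i) / B (α i) (α i)) • α i) {L : List ι}
    (hL : L.Pairwise fun j k => E (α k) (α j) = 0) {i : ι} (hi : i ∈ L)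
    (hαi : B (α i) (α i) ≠ 0) (v : V) : E (α i) ((L.map s).prod v) = -E v (α i) := by
  obtain ⟨L₁, L₂, rfl⟩ := List.append_of_mem hi
  simp only [List.pairwise_append, List.pairwise_cons] at hL
  obtain ⟨-, ⟨hafter, -⟩, hbefore⟩ := hL
  have left : ∀ x, E (α i) ((L₁.map s).prod x) = E (α i) x :=
    List.apply_prod_map_eq_of_forall fun k hk x => by
      rw [hs, map_sub, map_smul, hbefore k hk i List.mem_cons_self, smul_zero, sub_zero]
  have right : ∀ x, E ((L₂.map s).prod x) (α i) = E x (α i) :=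
    List.apply_prod_map_eq_of_forall (φ := fun x => E x (α i)) fun k hk x => by
      simp only [hs, map_sub, map_smul, LinearMap.sub_apply, LinearMap.smul_apply,
        hafter k hk, smul_zero, sub_zero]
  simp only [List.map_append, List.map_cons, List.prod_append, List.prod_cons,
    Module.End.mul_apply, left]
  rw [hs, apply_reflection_eq_neg hB hαi, right]

variable {c : Module.End K V}

theorem isUnit_one_sub_of_apply_eq_neg [FiniteDimensional K V]
    (hB : ∀ x y, B x y = E x y + E y x) (hskew : ∀ w v, E w (c v) = -E v w)
    (hanis : ∀ x, B x x = 0 → x = 0) : IsUnit (1 - c) := by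
  rw [LinearMap.isUnit_iff_ker_eq_bot, LinearMap.ker_eq_bot']
  intro v hv
  have hcv : c v = v := (sub_eq_zero.1 hv).symm
  have hvv : E v v = -E v v := by simpa [hcv] using hskew v v
  refine hanis v ?_
  rw [hB]
  linear_combination hvv

theorem cayley_apply_eq_sub (hB : ∀ x y, B x y = E x y + E y x)
    (hskew : ∀ w v, E w (c v) = -E v w) {T : Module.End K V} (hT : (1 - c) * T = 1)
    (x y : V) : B (((1 + c) * T) x) y = E y x - E x y := by
  have hx : T x - c (T x) = x := by simpa using congr($hT x)
  rw [Module.End.mul_apply]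
  generalize T x = w at hx
  subst hx
  simp only [LinearMap.add_apply, Module.End.one_apply, hB, map_add, map_sub,
    LinearMap.sub_apply, hskew]
  ring

end Skew

section UpperHalf

variable {K V ι κ : Type*} [Field K] [AddCommGroup V] [Module K V] [Fintype ι] [DecidableEq ι]
  [LinearOrder κ]

def upperHalf (B : LinearMap.BilinForm K V) (b : Module.Basis ι K V) (pos : ι → κ) :
    LinearMap.BilinForm K V :=
  Matrix.toLinearMap₂ b b fun i j =>
    if i = j then B (b i) (b i) / 2 else if pos i < pos j then B (b i) (b j) else 0

variable (B : LinearMap.BilinForm K V) (b : Module.Basis ι K V) {pos : ι → κ}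

theorem upperHalf_apply_basis (i j : ι) : upperHalf B b pos (b i) (b j) =
    if i = j then B (b i) (b i) / 2 else if pos i < pos j then B (b i) (b j) else 0 :=
  Matrix.toLinearMap₂_apply_basis ..

theorem upperHalf_apply_basis_of_lt {i j : ι} (h : pos j < pos i) :
    upperHalf B b pos (b i) (b j) = 0 := by
  rw [upperHalf_apply_basis, if_neg (fun hij => h.ne (by rw [hij])), if_neg h.not_gt]

variable (hsymm : ∀ x y, B x y = B y x) (hpos : pos.Injective)
include hsymm hpos

theorem upperHalf_sub_flip_apply_basis (i j : ι) :
    upperHalf B b pos (b j) (b i) - upperHalf B b pos (b i) (b j) =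
      (if i = j then 0 else if pos i < pos j then -1 else 1) * B (b i) (b j) := by
  simp only [upperHalf_apply_basis]
  rcases eq_or_ne i j with rfl | hne
  · simp
  rcases (hpos.ne hne).lt_or_gt with hlt | hgt
  · simp [hne, hne.symm, hlt, hlt.not_gt]
  · simp [hne, hne.symm, hgt, hgt.not_gt, hsymm (b j)]

theorem upperHalf_add_flip_apply [NeZero (2 : K)] (x y : V) :
    B x y = upperHalf B b pos x y + upperHalf B b pos y x := by
  suffices B = upperHalf B b pos + LinearMap.flip (upperHalf B b pos) from congr($this x y)
  refine ext_basis b fun i j => ?_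
  simp only [LinearMap.add_apply, LinearMap.flip_apply, upperHalf_apply_basis]
  rcases eq_or_ne i j with rfl | hne
  · simp only [if_true]
    field_simp
    ring
  rcases (hpos.ne hne).lt_or_gt with hlt | hgt
  · simp [hne, hne.symm, hlt, hlt.not_gt]
  · simp [hne, hne.symm, hgt, hgt.not_gt, hsymm (b j)]

end UpperHalf

theorem upperHalf_apply_coxeter {K V : Type*} [Field K] [NeZero (2 : K)] [AddCommGroup V]
    [Module K V] {l : ℕ} (B : LinearMap.BilinForm K V) (hsymm : ∀ x y, B x y = B y x)
    (b : Module.Basis (Fin l) K V) (hb : ∀ i, B (b i) (b i) ≠ 0) {s : Fin l → Module.End K V}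
    (hs : ∀ i v, s i v = v - (2 * B v (b i) / B (b i) (b i)) • b i) (π : Equiv.Perm (Fin l))
    (w v : V) :
    upperHalf B b π.symm w ((List.ofFn fun k => s (π k)).prod v) =
      -upperHalf B b π.symm v w := by
  set E := upperHalf B b π.symm
  have hE := upperHalf_add_flip_apply B b hsymm π.symm.injective
  suffices h : LinearMap.flip E ((List.ofFn fun k => s (π k)).prod v) = -E v from
    congr($h w)
  refine b.ext fun i => ?_
  rw [LinearMap.flip_apply, LinearMap.neg_apply, show (List.ofFn fun k => s (π k)) =
    (List.ofFn π).map s from List.map_ofFn.symm]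
  refine apply_prod_reflections_eq_neg hE hs ?_ (List.mem_ofFn.2 ⟨π.symm i, by simp⟩) (hb i) v
  exact List.pairwise_ofFn.2 fun p q hpq => upperHalf_apply_basis_of_lt B b (by simpa using hpq)

end LinearMap.BilinForm

open LinearMap.BilinForm

theorem cayley_transform_of_coxeter_element_general
    (l : ℕ) (V : Type*) [AddCommGroup V] [Module ℝ V] [FiniteDimensional ℝ V]
    (B : LinearMap.BilinForm ℝ V)
    (hsymm : ∀ x y, B x y = B y x)
    (hpos : ∀ x : V, x ≠ 0 → 0 < B x x)
    (α : Fin l → V)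
    (hindep : LinearIndependent ℝ α)
    (hspan : Submodule.span ℝ (Set.range α) = ⊤)
    (s : Fin l → Module.End ℝ V)
    (hs : ∀ i (v : V), s i v = v - (2 * B v (α i) / B (α i) (α i)) • α i)
    (π : Equiv.Perm (Fin l))
    (c : Module.End ℝ V)
    (hc : c = (List.ofFn fun k => s (π k)).prod) :
    ∃ T : Module.End ℝ V, (1 - c) * T = 1 ∧ T * (1 - c) = 1 ∧
      ∀ i j, B (((1 + c) * T) (α i)) (α j) =
        (if i = j then (0 : ℝ) else if π.symm i < π.symm j then -1 else 1) *
          B (α i) (α j) := by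
  obtain ⟨b, rfl⟩ : ∃ b : Module.Basis (Fin l) ℝ V, ⇑b = α :=
    ⟨.mk hindep hspan.ge, Module.Basis.coe_mk _ _⟩
  have hanis : ∀ x, B x x = 0 → x = 0 := fun x hx => by_contra fun h => (hpos x h).ne' hx
  set E := upperHalf B b π.symm
  have hE : ∀ x y, B x y = E x y + E y x := upperHalf_add_flip_apply B b hsymm π.symm.injective
  have hskew : ∀ w v, E w (c v) = -E v w := by
    subst hc
    exact upperHalf_apply_coxeter B hsymm b (fun i => (hpos _ (b.ne_zero i)).ne') hs π
  have hunit := isUnit_one_sub_of_apply_eq_neg hE hskew hanis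
  refine ⟨↑hunit.unit⁻¹, hunit.mul_val_inv, hunit.val_inv_mul, fun i j => ?_⟩
  rw [cayley_apply_eq_sub hE hskew hunit.mul_val_inv,
    upperHalf_sub_flip_apply_basis B b hsymm π.symm.injective]

/-- invertibility of `1 − s_π` and the matrix elements of the Cayley
transform of a Coxeter element `s_π` in the basis of simple roots. -/
theorem cayley_transform_of_coxeter_element
    (l : ℕ) (V : Type*) [AddCommGroup V] [Module ℝ V] [FiniteDimensional ℝ V]
    (B : LinearMap.BilinForm ℝ V)
    (hsymm : ∀ x y, B x y = B y x)
    (hpos : ∀ x : V, x ≠ 0 → 0 < B x x)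
    (α : Fin l → V)
    (hindep : LinearIndependent ℝ α)
    (hspan : Submodule.span ℝ (Set.range α) = ⊤)
    (a : Matrix (Fin l) (Fin l) ℤ) (d : Fin l → ℕ)
    (ha_diag : ∀ i, a i i = 2)
    (ha_offdiag : ∀ i j, i ≠ j → a i j ≤ 0)
    (hd_pos : ∀ i, 0 < d i)
    (hd_coprime : Finset.univ.gcd d = 1)
    (hb_symm : ∀ i j, (d i : ℤ) * a i j = (d j : ℤ) * a j i)
    (hB : ∀ i j, B (α i) (α j) = ((d i : ℤ) * a i j : ℤ))
    (s : Fin l → Module.End ℝ V)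
    (hs : ∀ i (v : V), s i v = v - (2 * B v (α i) / B (α i) (α i)) • α i)
    (π : Equiv.Perm (Fin l))
    (c : Module.End ℝ V)
    (hc : c = (List.ofFn fun k => s (π k)).prod) :
    ∃ T : Module.End ℝ V, (1 - c) * T = 1 ∧ T * (1 - c) = 1 ∧
      ∀ i j, B (((1 + c) * T) (α i)) (α j) =
        (if i = j then (0 : ℝ) else if π.symm i < π.symm j then -1 else 1) *
          B (α i) (α j) :=
  cayley_transform_of_coxeter_element_general l V B hsymm hpos α hindep hspan s hs π c hc
end
end

section
/- Let U_h^{s_π}(n_+) be the quotient of the free ℂ[[h]]-algebra on generators e_1,…,e_l by the two-sided ideal generated by the modified quantum Serre relations Σ_{r=0}^{1−a_ij} (−1)^r q^{r c_ij^π} [1−a_ij choose r]_{q_i} e_i^{1−a_ij−r} e_j e_i^r for all i ≠ j. Then for any c_1,…,c_l ∈ ℂ[[h]] there exists a (unique) ℂ[[h]]-algebra homomorphism χ_h^{s_π}: U_h^{s_π}(n_+) → ℂ[[h]] with χ_h^{s_π}(e_i) = c_i for all i; that is, the assignment e_i ↦ c_i annihilates every modified quantum Serre relation. -/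
/-!
STATEMENT 15 (non-singular characters of the modified quantum Serre algebra
`U_h^{s_π}(n₊)`; \cite{S1}, Proposition 2).

Context: `(a i j)` is the Cartan matrix of a finite-dimensional complex simple Lie
algebra of rank `l` (`a i i = 2`, `a i j ≤ 0` for `i ≠ j`), `d i` are coprime positive
integers with `b i j = d i * a i j` symmetric; for a permutation `π` of `{0,…,l-1}`,
`c^π i j = ε^π i j * b i j` with `ε^π i j = −1, 0, 1` according to
`π⁻¹ i < π⁻¹ j`, `i = j`, `π⁻¹ i > π⁻¹ j`.  We work over `ℂ[[h]]` with `q = e^h`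
(a unit of `ℂ[[h]]`) and `q_i = q^{d i}`; `[m choose r]_{q_i}` denotes the balanced
q-binomial coefficient (here defined for a unit `q` of any commutative ring by the
balanced q-Pascal recursion, which agrees with `[m]_q!/([r]_q! [m−r]_q!)`).

`U_h^{s_π}(n₊)` is the quotient of the free `ℂ[[h]]`-algebra on `e 0, …, e (l-1)` by the
two-sided ideal generated by the modified quantum Serre relations
`∑_{r=0}^{1−a i j} (−1)^r q^{r c^π i j} [1−a i j choose r]_{q_i}
  e i ^(1−a i j−r) * e j * e i ^ r`  for `i ≠ j`.

Claim: for any `c 0, …, c (l-1) ∈ ℂ[[h]]` there is a unique `ℂ[[h]]`-algebra homomorphism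
`χ : U_h^{s_π}(n₊) → ℂ[[h]]` with `χ (e i) = c i`.
-/

noncomputable section

namespace QuantumSerre

/-- `q = e^h`, as a unit of `ℂ[[h]]`. -/
def qExp : (PowerSeries ℂ)ˣ :=
  (PowerSeries.isUnit_iff_constantCoeff.mpr
    (by rw [PowerSeries.constantCoeff_exp]; exact isUnit_one)).unit

variable {R : Type*} [CommRing R]

/-- The balanced q-binomial coefficient `[n choose k]_q = [n]_q!/([k]_q! [n−k]_q!)`
(where `[n]_q = (qⁿ − q⁻ⁿ)/(q − q⁻¹)`), for a unit `q` of a commutative ring, defined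
via the balanced q-Pascal recursion
`[n+1 choose k+1]_q = q^{n−k} [n choose k]_q + q^{−k−1} [n choose k+1]_q`. -/
def balQBinom (q : Rˣ) : ℕ → ℕ → R
  | _, 0 => 1
  | 0, _ + 1 => 0
  | n + 1, k + 1 =>
      ((q ^ ((n : ℤ) - (k : ℤ)) : Rˣ) : R) * balQBinom q n k +
        ((q ^ (-(k : ℤ) - 1) : Rˣ) : R) * balQBinom q n (k + 1)

lemma balQBinom_zero (q : Rˣ) (n : ℕ) : balQBinom q n 0 = 1 := by
  cases n <;> rfl

lemma balQBinom_eq_zero (q : Rˣ) : ∀ n k, n < k → balQBinom q n k = 0 := by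
  intro n
  induction n with
  | zero => intro k hk; obtain ⟨k, rfl⟩ := Nat.exists_eq_add_of_lt hk; rfl
  | succ n ih =>
    intro k hk
    obtain ⟨m, rfl⟩ : ∃ m, k = m + 1 := ⟨k - 1, by omega⟩
    show _ * balQBinom q n m + _ * balQBinom q n (m+1) = 0
    rw [ih m (by omega), ih (m+1) (by omega)]
    ring

/-- `T q m s = ∑_{r=0}^m (-1)^r q^{rs} [m choose r]_q`. -/
def T (q : Rˣ) (m : ℕ) (s : ℤ) : R :=
  ∑ r ∈ Finset.range (m + 1),
    (-1 : R) ^ r * ((q ^ ((r : ℤ) * s) : Rˣ) : R) * balQBinom q m r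

lemma T_succ (q : Rˣ) (n : ℕ) (s : ℤ) :
    T q (n + 1) s = (1 - ((q ^ (s + n) : Rˣ) : R)) * T q n (s - 1) := by
  have hB1 : balQBinom q n (n + 1) = 0 := balQBinom_eq_zero q n (n+1) (by omega)
  conv_lhs => unfold T
  rw [Finset.sum_range_succ' _ (n + 1)]
  have hsplit : ∀ k ∈ Finset.range (n + 1),
      (-1 : R) ^ (k+1) * ((q ^ (((k+1 : ℕ) : ℤ) * s) : Rˣ) : R) * balQBinom q (n+1) (k+1)
      = -(((q ^ (s + n) : Rˣ) : R) * ((-1:R)^k * ((q ^ ((k:ℤ) * (s-1)) : Rˣ) : R) * balQBinom q n k))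
        + ((-1:R)^(k+1) * ((q ^ (((k+1:ℕ):ℤ) * (s-1)) : Rˣ) : R) * balQBinom q n (k+1)) := by
    intro k _
    show (-1 : R) ^ (k+1) * _ * (((q ^ ((n : ℤ) - (k : ℤ)) : Rˣ) : R) * balQBinom q n k +
        ((q ^ (-(k : ℤ) - 1) : Rˣ) : R) * balQBinom q n (k + 1)) = _
    have e1 : ((k+1 : ℕ) : ℤ) * s + ((n:ℤ) - k) = (s + n) + (k:ℤ)*(s-1) := by push_cast; ring
    have e2 : ((k+1 : ℕ) : ℤ) * s + (-(k:ℤ) - 1) = ((k+1:ℕ):ℤ) * (s-1) := by push_cast; ring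
    have u1 : ((q ^ (((k+1:ℕ):ℤ) * s) : Rˣ) : R) * ((q ^ ((n : ℤ) - (k : ℤ)) : Rˣ) : R)
        = ((q ^ (s + n) : Rˣ) : R) * ((q ^ ((k:ℤ)*(s-1)) : Rˣ) : R) := by
      rw [← Units.val_mul, ← Units.val_mul, ← zpow_add, ← zpow_add, e1]
    have u2 : ((q ^ (((k+1:ℕ):ℤ) * s) : Rˣ) : R) * ((q ^ (-(k:ℤ) - 1) : Rˣ) : R)
        = ((q ^ (((k+1:ℕ):ℤ) * (s-1)) : Rˣ) : R) := by
      rw [← Units.val_mul, ← zpow_add, e2]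
    calc (-1 : R) ^ (k+1) * ((q ^ (((k+1:ℕ):ℤ) * s) : Rˣ) : R) *
          (((q ^ ((n : ℤ) - (k : ℤ)) : Rˣ) : R) * balQBinom q n k +
          ((q ^ (-(k : ℤ) - 1) : Rˣ) : R) * balQBinom q n (k + 1))
        = (-1:R)^(k+1) * (((q ^ (((k+1:ℕ):ℤ) * s) : Rˣ) : R) * ((q ^ ((n : ℤ) - (k : ℤ)) : Rˣ) : R)) * balQBinom q n k
          + (-1:R)^(k+1) * (((q ^ (((k+1:ℕ):ℤ) * s) : Rˣ) : R) * ((q ^ (-(k:ℤ) - 1) : Rˣ) : R)) * balQBinom q n (k+1) := by ring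
      _ = _ := by rw [u1, u2]; ring
  rw [Finset.sum_congr rfl hsplit, Finset.sum_add_distrib]
  have hA : ∑ k ∈ Finset.range (n+1),
      -(((q ^ (s + n) : Rˣ) : R) * ((-1:R)^k * ((q ^ ((k:ℤ) * (s-1)) : Rˣ) : R) * balQBinom q n k))
      = -(((q ^ (s + n) : Rˣ) : R) * T q n (s-1)) := by
    rw [Finset.sum_neg_distrib, ← Finset.mul_sum]; rfl
  have hC : ∑ k ∈ Finset.range (n+1),
      ((-1:R)^(k+1) * ((q ^ (((k+1:ℕ):ℤ) * (s-1)) : Rˣ) : R) * balQBinom q n (k+1))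
      = T q n (s-1) - 1 := by
    have h2 := Finset.sum_range_succ' (fun j => (-1:R)^j * ((q ^ ((j:ℤ) * (s-1)) : Rˣ) : R) * balQBinom q n j) (n+1)
    rw [Finset.sum_range_succ] at h2
    simp only [hB1, mul_zero, add_zero, Nat.cast_zero, zero_mul, zpow_zero,
      Units.val_one, pow_zero, mul_one, one_mul] at h2
    have : (∑ j ∈ Finset.range (n+1),
        (-1:R)^j * ((q ^ ((j:ℤ) * (s-1)) : Rˣ) : R) * balQBinom q n j) = T q n (s-1) := rfl
    rw [this, balQBinom_zero] at h2
    -- h2 : T q n (s-1) = ∑ k, f(k+1) + 1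
    linear_combination -h2
  have h0 : (-1:R)^0 * ((q ^ (((0:ℕ):ℤ) * s) : Rˣ) : R) * balQBinom q (n+1) 0 = 1 := by
    simp [balQBinom_zero]
  rw [hA, hC, h0]
  ring

lemma T_left (q : Rˣ) (m : ℕ) (hm : 1 ≤ m) : T q m (1 - (m : ℤ)) = 0 := by
  obtain ⟨n, rfl⟩ : ∃ n, m = n + 1 := ⟨m - 1, by omega⟩
  rw [T_succ]
  rw [show (1 - ((n+1:ℕ):ℤ)) + (n:ℤ) = 0 by push_cast; ring]
  simp

lemma T_right (q : Rˣ) (m : ℕ) (hm : 1 ≤ m) : T q m ((m : ℤ) - 1) = 0 := by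
  obtain ⟨n, rfl⟩ : ∃ n, m = n + 1 := ⟨m - 1, by omega⟩
  clear hm
  induction n with
  | zero =>
    rw [T_succ, show (((0+1:ℕ):ℤ) - 1) + ((0:ℕ):ℤ) = 0 by norm_num]
    simp
  | succ n ih =>
    rw [T_succ, show (((n+1+1:ℕ):ℤ) - 1) - 1 = ((n+1:ℕ):ℤ) - 1 by push_cast; ring]
    rw [ih, mul_zero]

/-- The modified quantum Serre relation
`∑_{r=0}^{1−a i j} (−1)^r q^{r c^π i j} [1−a i j choose r]_{q_i}
 (e i)^{1−a i j−r} (e j) (e i)^r` in the free algebra `ℂ[[h]]⟨e 0, …, e (l-1)⟩`. -/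
def serreElt (l : ℕ) (a : Matrix (Fin l) (Fin l) ℤ) (d : Fin l → ℕ)
    (cP : Matrix (Fin l) (Fin l) ℤ) (i j : Fin l) :
    FreeAlgebra (PowerSeries ℂ) (Fin l) :=
  ∑ r ∈ Finset.range ((1 - a i j).toNat + 1),
    ((-1 : PowerSeries ℂ) ^ r *
        ((qExp ^ ((r : ℤ) * cP i j) : (PowerSeries ℂ)ˣ) : PowerSeries ℂ) *
        balQBinom (qExp ^ d i) (1 - a i j).toNat r) •
      (FreeAlgebra.ι (PowerSeries ℂ) i ^ ((1 - a i j).toNat - r) *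
        FreeAlgebra.ι (PowerSeries ℂ) j *
        FreeAlgebra.ι (PowerSeries ℂ) i ^ r)

/-- The relations defining `U_h^{s_π}(n₊)`: each modified quantum Serre element (for
`i ≠ j`) is set to `0`; quotienting the free algebra by these relations (`RingQuot`)
is exactly quotienting by the two-sided ideal they generate. -/
def serreRel (l : ℕ) (a : Matrix (Fin l) (Fin l) ℤ) (d : Fin l → ℕ)
    (cP : Matrix (Fin l) (Fin l) ℤ) :
    FreeAlgebra (PowerSeries ℂ) (Fin l) → FreeAlgebra (PowerSeries ℂ) (Fin l) → Prop :=
  fun x y => (∃ i j : Fin l, i ≠ j ∧ x = serreElt l a d cP i j) ∧ y = 0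

/-- the quotient `U_h^{s_π}(n₊)` of the free `ℂ[[h]]`-algebra by the
modified quantum Serre relations admits, for any `c i ∈ ℂ[[h]]`, a unique algebra
character sending `e i ↦ c i`; i.e. the assignment `e i ↦ c i` annihilates every
modified quantum Serre relation. -/
theorem exists_unique_character_of_modified_serre
    (l : ℕ) (a : Matrix (Fin l) (Fin l) ℤ) (d : Fin l → ℕ)
    (ha_diag : ∀ i, a i i = 2)
    (ha_offdiag : ∀ i j, i ≠ j → a i j ≤ 0)
    (hd_pos : ∀ i, 0 < d i)
    (hd_coprime : Finset.univ.gcd d = 1)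
    (hb_symm : ∀ i j, (d i : ℤ) * a i j = (d j : ℤ) * a j i)
    (π : Equiv.Perm (Fin l))
    (cP : Matrix (Fin l) (Fin l) ℤ)
    (hcP : ∀ i j, cP i j =
      (if i = j then 0 else if π.symm i < π.symm j then -1 else 1) * ((d i : ℤ) * a i j))
    (c : Fin l → PowerSeries ℂ) :
    ∃! χ : RingQuot (serreRel l a d cP) →ₐ[PowerSeries ℂ] PowerSeries ℂ,
      ∀ i, χ (RingQuot.mkAlgHom (PowerSeries ℂ) (serreRel l a d cP)
        (FreeAlgebra.ι (PowerSeries ℂ) i)) = c i := by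
  set φ : FreeAlgebra (PowerSeries ℂ) (Fin l) →ₐ[PowerSeries ℂ] PowerSeries ℂ :=
    FreeAlgebra.lift (PowerSeries ℂ) c with hφ
  have hrel : ∀ ⦃x y⦄, serreRel l a d cP x y → φ x = φ y := by
    rintro x y ⟨⟨i, j, hij, rfl⟩, rfl⟩
    rw [map_zero]
    set m := (1 - a i j).toNat with hmdef
    have hm : 1 ≤ m := by have := ha_offdiag i j hij; omega
    have hmz : (m : ℤ) = 1 - a i j := by have := ha_offdiag i j hij; omega
    -- the exponent s with cP i j = d i * s
    set s : ℤ := (if (π.symm i : Fin l) < π.symm j then -1 else 1) * a i j with hs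
    have hcPs : cP i j = (d i : ℤ) * s := by
      rw [hcP i j, if_neg hij, hs]; ring
    have hφx : φ (serreElt l a d cP i j) =
        T (qExp ^ d i) m s * (c i ^ m * c j) := by
      unfold serreElt T
      rw [map_sum, Finset.sum_mul]
      apply Finset.sum_congr rfl
      intro r hr
      have hrm : r ≤ m := by simpa using Nat.lt_succ_iff.mp (Finset.mem_range.mp hr)
      rw [map_smul, map_mul, map_mul, map_pow, map_pow, FreeAlgebra.lift_ι_apply,
        FreeAlgebra.lift_ι_apply, smul_eq_mul]
      have hpow : c i ^ (m - r) * c j * c i ^ r = c i ^ m * c j := by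
        rw [mul_right_comm, ← pow_add, Nat.sub_add_cancel hrm]
      have hq : ((qExp ^ ((r : ℤ) * cP i j) : (PowerSeries ℂ)ˣ) : PowerSeries ℂ)
          = (((qExp ^ d i) ^ ((r : ℤ) * s) : (PowerSeries ℂ)ˣ) : PowerSeries ℂ) := by
        rw [← zpow_natCast qExp (d i), ← zpow_mul, hcPs]
        congr 1
        ring
      rw [hpow, hq]
    rw [hφx]
    have hT : T (qExp ^ d i) m s = 0 := by
      rcases lt_or_ge (π.symm i) (π.symm j) with h | h
      · rw [hs, if_pos h]
        have : (-1 : ℤ) * a i j = (m : ℤ) - 1 := by omega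
        rw [this]
        exact T_right _ m hm
      · rw [hs, if_neg (not_lt.mpr h)]
        have : (1 : ℤ) * a i j = 1 - (m : ℤ) := by omega
        rw [this]
        exact T_left _ m hm
    rw [hT, zero_mul]
  refine ⟨RingQuot.liftAlgHom (PowerSeries ℂ) ⟨φ, hrel⟩, fun i => ?_, fun χ' hχ' => ?_⟩
  · rw [RingQuot.liftAlgHom_mkAlgHom_apply, hφ, FreeAlgebra.lift_ι_apply]
  · apply RingQuot.ringQuot_ext'
    apply FreeAlgebra.hom_ext
    funext i
    simp only [Function.comp_apply, AlgHom.comp_apply]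
    rw [RingQuot.liftAlgHom_mkAlgHom_apply, hφ, FreeAlgebra.lift_ι_apply, hχ' i]


end QuantumSerre
end
end
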